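/- arXiv:1804.00729 — 5 statements merged into one kernel-verified Lean document; each statement's English description precedes it below -/
import Mathlib

section
/- Let L_B be the weighted Laplacian matrix with entries L_B[i][j] = −V_i V_j b_{ij} cos(θ_i − θ_j) for i ≠ j and diagonal entries L_B[i][i] = Σ_{l≠i} V_i V_l b_{il} cos(θ_i − θ_l), where b_{ij} = b_{ji} ≥ 0, 0 < V_i ≤ V_max,i, and |θ_i − θ_j| < π/2 whenever b_{ij} > 0. Define γ_i = 2 Σ_j V_max,i V_max,j b_{ij} and Γ = diag(γ₁,…,γₙ). Then 0 ⪯ Γ^{−1/2} L_B Γ^{−1/2} ⪯ I (assuming all γ_i > 0). -/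
/-!
Write `L_B = D_w - W` for the weights `w i j = V i V j b i j cos (θ i - θ j)`, which are symmetric,
nonnegative by the angle condition, and bounded by `c i j = Vmax i Vmax j b i j`. The quadratic form
of `L_B` is `½ ∑ w i j (x i - x j)²`, so `L_B ⪰ 0`, and since `(x i - x j)² ≤ 2 (x i² + x j²)` it is at
most `∑ c i j (x i² + x j²) = ∑ γ i x i²`, so `L_B ⪯ Γ`. Both inequalities survive the congruence
by `Γ^{-1/2}`.
-/

open Matrix Finset

theorem mul_cos_nonneg_of_abs_lt_pi_div_two {a b : ℝ} (hb : 0 ≤ b)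
    (h : 0 < b → |a| < Real.pi / 2) : 0 ≤ b * Real.cos a := by
  rcases hb.eq_or_lt with rfl | hb
  · simp
  · obtain ⟨hlo, hhi⟩ := abs_lt.1 (h hb)
    exact mul_nonneg hb.le (Real.cos_nonneg_of_neg_pi_div_two_le_of_le hlo.le hhi.le)

namespace Matrix

variable {ι : Type*} [Fintype ι] [DecidableEq ι]

def laplacian (w : ι → ι → ℝ) : Matrix ι ι ℝ :=
  diagonal (fun i => ∑ j, w i j) - of w

variable {w : ι → ι → ℝ}

theorem laplacian_apply (i j : ι) :
    laplacian w i j = if i = j then ∑ l, (if l = i then 0 else w i l) else -w i j := by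
  by_cases h : i = j
  · subst h
    rw [Finset.sum_ite, Finset.sum_const_zero, zero_add, Finset.filter_ne',
      Finset.sum_erase_eq_sub (mem_univ i)]
    simp [laplacian]
  · simp [laplacian, h]

theorem laplacian_isHermitian (hw : ∀ i j, w i j = w j i) : (laplacian w).IsHermitian := by
  have hW : (of w)ᵀ = of w := by ext i j; exact hw j i
  simp [IsHermitian, laplacian, hW]

omit [DecidableEq ι] in
theorem sum_sum_mul_eq_of_symm (hw : ∀ i j, w i j = w j i) (f : ι → ℝ) :
    ∑ i, ∑ j, w i j * f j = ∑ i, ∑ j, w i j * f i := by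
  rw [Finset.sum_comm]
  simp_rw [hw]

theorem dotProduct_diagonal_mulVec (d x : ι → ℝ) : x ⬝ᵥ diagonal d *ᵥ x = ∑ i, d i * x i ^ 2 := by
  simp only [dotProduct, mulVec_diagonal]
  exact Finset.sum_congr rfl fun i _ => by ring

theorem dotProduct_laplacian_mulVec (hw : ∀ i j, w i j = w j i) (x : ι → ℝ) :
    x ⬝ᵥ laplacian w *ᵥ x = (∑ i, ∑ j, w i j * (x i - x j) ^ 2) / 2 := by
  have hW : x ⬝ᵥ of w *ᵥ x = ∑ i, ∑ j, w i j * (x i * x j) := by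
    simp only [dotProduct, mulVec, of_apply, Finset.mul_sum]
    exact Finset.sum_congr rfl fun i _ => Finset.sum_congr rfl fun j _ => by ring
  have expand : ∀ i j, w i j * (x i - x j) ^ 2
      = w i j * x i ^ 2 + w i j * x j ^ 2 - 2 * (w i j * (x i * x j)) := fun i j => by ring
  simp only [expand, Finset.sum_add_distrib, Finset.sum_sub_distrib, ← Finset.mul_sum,
    sum_sum_mul_eq_of_symm hw (x · ^ 2)]
  rw [laplacian, sub_mulVec, dotProduct_sub, dotProduct_diagonal_mulVec, hW]
  simp only [Finset.sum_mul]
  ring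

theorem posSemidef_laplacian (hw : ∀ i j, w i j = w j i) (hw₀ : ∀ i j, 0 ≤ w i j) :
    (laplacian w).PosSemidef := by
  refine posSemidef_iff_dotProduct_mulVec.2 ⟨laplacian_isHermitian hw, fun x => ?_⟩
  rw [star_trivial, dotProduct_laplacian_mulVec hw]
  exact div_nonneg (Finset.sum_nonneg fun i _ => Finset.sum_nonneg fun j _ =>
    mul_nonneg (hw₀ i j) (sq_nonneg _)) zero_le_two

theorem posSemidef_diagonal_sub_laplacian (hw : ∀ i j, w i j = w j i) {c : ι → ι → ℝ}
    (hc : ∀ i j, c i j = c j i) (hc₀ : ∀ i j, 0 ≤ c i j) (hwc : ∀ i j, w i j ≤ c i j) :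
    (diagonal (fun i => 2 * ∑ j, c i j) - laplacian w).PosSemidef := by
  refine posSemidef_iff_dotProduct_mulVec.2
    ⟨(isHermitian_diagonal _).sub (laplacian_isHermitian hw), fun x => ?_⟩
  have hdiag : ∑ i, 2 * (∑ j, c i j) * x i ^ 2 = ∑ i, ∑ j, c i j * (x i ^ 2 + x j ^ 2) := by
    simp only [mul_add, Finset.sum_add_distrib, sum_sum_mul_eq_of_symm hc (x · ^ 2),
      ← Finset.sum_mul]
    rw [← Finset.sum_add_distrib]
    exact Finset.sum_congr rfl fun i _ => by ring
  have hterm : ∀ i j, w i j * (x i - x j) ^ 2 ≤ 2 * (c i j * (x i ^ 2 + x j ^ 2)) := fun i j =>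
    calc w i j * (x i - x j) ^ 2 ≤ c i j * (x i - x j) ^ 2 :=
          mul_le_mul_of_nonneg_right (hwc i j) (sq_nonneg _)
      _ ≤ c i j * (2 * (x i ^ 2 + x j ^ 2)) :=
          mul_le_mul_of_nonneg_left (by nlinarith [sq_nonneg (x i + x j)]) (hc₀ i j)
      _ = 2 * (c i j * (x i ^ 2 + x j ^ 2)) := by ring
  have hsum := Finset.sum_le_sum fun i (_ : i ∈ univ) =>
    Finset.sum_le_sum fun j (_ : j ∈ univ) => hterm i j
  simp only [← Finset.mul_sum] at hsum
  rw [star_trivial, sub_mulVec, dotProduct_sub, dotProduct_diagonal_mulVec, hdiag,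
    dotProduct_laplacian_mulVec hw]
  linarith

theorem posSemidef_normalized_of_le_diagonal {A M : Matrix ι ι ℝ} {γ : ι → ℝ}
    (hγ : ∀ i, 0 < γ i) (hM : ∀ i j, M i j = A i j / (Real.sqrt (γ i) * Real.sqrt (γ j)))
    (hA : A.PosSemidef) (hΓA : (diagonal γ - A).PosSemidef) :
    M.PosSemidef ∧ (1 - M).PosSemidef := by
  set D : Matrix ι ι ℝ := diagonal fun i => (Real.sqrt (γ i))⁻¹
  have hsqrt : ∀ i, Real.sqrt (γ i) ≠ 0 := fun i => (Real.sqrt_pos.2 (hγ i)).ne'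
  have hMD : M = Dᴴ * A * D := ext fun i j => by
    simp only [D, hM, diagonal_conjTranspose, star_trivial, diagonal_mul, mul_diagonal]
    field_simp
  have hDΓD : Dᴴ * diagonal γ * D = 1 := by
    simp only [D, diagonal_conjTranspose, star_trivial, diagonal_mul_diagonal, ← diagonal_one]
    congr 1
    funext i
    field_simp [hsqrt i]
    exact (Real.sq_sqrt (hγ i).le).symm
  have hID : 1 - M = Dᴴ * (diagonal γ - A) * D := by
    rw [hMD, mul_sub, sub_mul, hDΓD]
  rw [hID, hMD]
  exact ⟨hA.conjTranspose_mul_mul_same D, hΓA.conjTranspose_mul_mul_same D⟩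

end Matrix

theorem stmt_4 {n : ℕ} (V Vmax θ : Fin n → ℝ) (b : Fin n → Fin n → ℝ)
    (hbsymm : ∀ i j, b i j = b j i) (hbnn : ∀ i j, 0 ≤ b i j)
    (hV : ∀ i, 0 < V i) (hVmax : ∀ i, V i ≤ Vmax i)
    (hθ : ∀ i j, 0 < b i j → |θ i - θ j| < Real.pi / 2)
    (LB : Matrix (Fin n) (Fin n) ℝ)
    (hLB : ∀ i j, LB i j =
      if i = j then ∑ l, (if l = i then 0 else V i * V l * b i l * Real.cos (θ i - θ l))
      else -(V i * V j * b i j * Real.cos (θ i - θ j)))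
    (γ : Fin n → ℝ)
    (hγdef : ∀ i, γ i = 2 * ∑ j, Vmax i * Vmax j * b i j)
    (hγpos : ∀ i, 0 < γ i)
    (M : Matrix (Fin n) (Fin n) ℝ)
    (hM : ∀ i j, M i j = LB i j / (Real.sqrt (γ i) * Real.sqrt (γ j))) :
    M.PosSemidef ∧ ((1 : Matrix (Fin n) (Fin n) ℝ) - M).PosSemidef := by
  set w : Fin n → Fin n → ℝ := fun i j => V i * V j * b i j * Real.cos (θ i - θ j)
  set c : Fin n → Fin n → ℝ := fun i j => Vmax i * Vmax j * b i j
  have hw : ∀ i j, w i j = w j i := fun i j => by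
    simp only [w, hbsymm i j, ← Real.cos_neg (θ i - θ j), neg_sub]; ring
  have hc : ∀ i j, c i j = c j i := fun i j => by simp only [c, hbsymm i j]; ring
  have hw₀ : ∀ i j, 0 ≤ w i j := fun i j => by
    simpa only [w, mul_assoc] using mul_nonneg (hV i).le <| mul_nonneg (hV j).le <|
      mul_cos_nonneg_of_abs_lt_pi_div_two (hbnn i j) (hθ i j)
  have hVV : ∀ i j, V i * V j ≤ Vmax i * Vmax j := fun i j =>
    mul_le_mul (hVmax i) (hVmax j) (hV j).le ((hV i).le.trans (hVmax i))
  have hc₀ : ∀ i j, 0 ≤ c i j := fun i j =>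
    mul_nonneg ((mul_pos (hV i) (hV j)).le.trans (hVV i j)) (hbnn i j)
  have hwc : ∀ i j, w i j ≤ c i j := fun i j =>
    calc w i j ≤ V i * V j * b i j :=
          mul_le_of_le_one_right (mul_nonneg (mul_pos (hV i) (hV j)).le (hbnn i j))
            (Real.cos_le_one _)
      _ ≤ c i j := mul_le_mul_of_nonneg_right (hVV i j) (hbnn i j)
  have hLBw : LB = laplacian w := ext fun i j => by rw [hLB, laplacian_apply]
  have hΓ : diagonal γ = diagonal (fun i => 2 * ∑ j, c i j) := by simp only [c, ← hγdef]
  refine posSemidef_normalized_of_le_diagonal hγpos hM ?_ ?_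
  · exact hLBw ▸ posSemidef_laplacian hw hw₀
  · exact hΓ ▸ hLBw ▸ posSemidef_diagonal_sub_laplacian hw hc hc₀ hwc
end

section
/- Let P(s) = diag(p₁(s),…,pₙ(s)) where each p_i(s) is a complex number, and let L = Q X Q* with Q ∈ ℂ^{n×m}, Q*Q = I_m, and X an m×m Hermitian matrix with εI ⪯ X ⪯ I for some ε > 0. Then every eigenvalue of Q* P Q X lies in the convex hull of the set {k·p_i : 1 ≤ i ≤ n, ε ≤ k ≤ 1}. -/
/-!
Write `X = Y * Y` with `Y` the Hermitian square root of `X`. An eigenvalue `μ` of `Qᴴ P Q X` is,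
through the eigenvector `u = Y v`, an eigenvalue of `Y Qᴴ P Q Y = (Q Y)ᴴ P (Q Y)`, hence equal to
the Rayleigh quotient of `(Q Y)ᴴ P (Q Y)` at `u`. That quotient factors as the Rayleigh quotient
of `P` at `Q Y u`, which lies in the convex hull of the `pᵢ` because `P` is diagonal, times the
Rayleigh quotient of `(Q Y)ᴴ (Q Y) = X` at `u`, which is a real number in `[ε, 1]` by `εI ⪯ X ⪯ I`.
-/

open Matrix
open scoped ComplexOrder

namespace Matrix

section Spectrum

variable {n K : Type*} [Fintype n] [DecidableEq n] [Field K]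

theorem exists_mulVec_eq_smul_of_mem_spectrum {M : Matrix n n K} {μ : K}
    (h : μ ∈ spectrum K M) : ∃ v ≠ 0, M *ᵥ v = μ • v := by
  rw [← spectrum_toLin', ← Module.End.hasEigenvalue_iff_mem_spectrum] at h
  obtain ⟨v, hv⟩ := h.exists_hasEigenvector
  exact ⟨v, hv.2, by simpa using Module.End.mem_eigenspace_iff.mp hv.1⟩

theorem exists_mulVec_eq_smul_of_mem_spectrum_mul {A B : Matrix n n K} {μ : K}
    (hB : Function.Injective B.mulVec) (h : μ ∈ spectrum K (A * B)) :
    ∃ u ≠ 0, (B * A) *ᵥ u = μ • u := by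
  obtain ⟨v, hv0, hv⟩ := exists_mulVec_eq_smul_of_mem_spectrum h
  refine ⟨B *ᵥ v, fun h0 => hv0 (hB (by rw [h0, mulVec_zero])), ?_⟩
  rw [mulVec_mulVec, Matrix.mul_assoc, ← mulVec_mulVec, hv, mulVec_smul]

end Spectrum

section Positivity

variable {n 𝕜 : Type*} [DecidableEq n] [RCLike 𝕜]

theorem PosSemidef.posDef_of_sub_smul_one {X : Matrix n n 𝕜} {a : ℝ} (ha : 0 < a)
    (h : (X - (a : 𝕜) • 1).PosSemidef) : X.PosDef := by
  simpa using PosDef.posSemidef_add h (PosDef.one.smul (RCLike.ofReal_pos (K := 𝕜) |>.mpr ha))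

theorem PosSemidef.exists_isHermitian_mul_self_eq [Fintype n] {X : Matrix n n 𝕜}
    (hX : X.PosSemidef) : ∃ Y : Matrix n n 𝕜, Y.IsHermitian ∧ Y * Y = X :=
  open MatrixOrder in
  ⟨CFC.sqrt X, (CFC.sqrt_nonneg X).posSemidef.isHermitian, CFC.sqrt_mul_sqrt_self X hX.nonneg⟩

end Positivity

section RayleighQuotient

variable {n m 𝕜 : Type*} [Fintype n] [Fintype m] [RCLike 𝕜]

-- At `w = 0` this is `0 / 0 = 0`, which lets the factorisation
-- `rayleighQuotient_conjTranspose_mul_mul` hold without a nonvanishing hypothesis.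
def rayleighQuotient (M : Matrix n n 𝕜) (w : n → 𝕜) : 𝕜 :=
  (star w ⬝ᵥ (M *ᵥ w)) / (star w ⬝ᵥ w)

theorem rayleighQuotient_smul (a : 𝕜) (M : Matrix n n 𝕜) (w : n → 𝕜) :
    rayleighQuotient (a • M) w = a * rayleighQuotient M w := by
  rw [rayleighQuotient, rayleighQuotient, smul_mulVec, dotProduct_smul, smul_eq_mul,
    mul_div_assoc]

theorem rayleighQuotient_one [DecidableEq n] {w : n → 𝕜} (hw : w ≠ 0) :
    rayleighQuotient 1 w = 1 := by
  rw [rayleighQuotient, one_mulVec, div_self (dotProduct_star_self_eq_zero.not.mpr hw)]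

theorem rayleighQuotient_eq_of_mulVec_eq_smul {M : Matrix n n 𝕜} {w : n → 𝕜} {μ : 𝕜}
    (hw : w ≠ 0) (h : M *ᵥ w = μ • w) : rayleighQuotient M w = μ := by
  rw [rayleighQuotient, h, dotProduct_smul, smul_eq_mul,
    mul_div_cancel_right₀ _ (dotProduct_star_self_eq_zero.not.mpr hw)]

theorem rayleighQuotient_le_rayleighQuotient {M N : Matrix n n 𝕜} (h : (N - M).PosSemidef)
    (w : n → 𝕜) : rayleighQuotient M w ≤ rayleighQuotient N w := by
  have hquad := h.dotProduct_mulVec_nonneg w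
  rw [sub_mulVec, dotProduct_sub, sub_nonneg] at hquad
  exact div_le_div_of_nonneg_right hquad (dotProduct_star_self_nonneg w)

theorem exists_rayleighQuotient_eq_ofReal [DecidableEq n] {X : Matrix n n 𝕜} {a b : ℝ}
    (hlow : (X - (a : 𝕜) • 1).PosSemidef) (hup : ((b : 𝕜) • 1 - X).PosSemidef) {w : n → 𝕜}
    (hw : w ≠ 0) : ∃ k : ℝ, a ≤ k ∧ k ≤ b ∧ rayleighQuotient X w = k := by
  have ha := rayleighQuotient_le_rayleighQuotient hlow w
  have hb := rayleighQuotient_le_rayleighQuotient hup w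
  rw [rayleighQuotient_smul, rayleighQuotient_one hw, mul_one] at ha hb
  have hreal : rayleighQuotient X w = (RCLike.re (rayleighQuotient X w) : 𝕜) :=
    RCLike.ext (by simp) (by simp [← (RCLike.le_iff_re_im.mp ha).2])
  rw [hreal, RCLike.ofReal_le_ofReal] at ha hb
  exact ⟨_, ha, hb, hreal⟩

theorem star_dotProduct_conjTranspose_mul_mul_mulVec (M : Matrix m m 𝕜) (B : Matrix m n 𝕜)
    (w : n → 𝕜) : star w ⬝ᵥ ((Bᴴ * M * B) *ᵥ w) = star (B *ᵥ w) ⬝ᵥ (M *ᵥ (B *ᵥ w)) := by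
  rw [star_mulVec, ← dotProduct_mulVec, mulVec_mulVec, mulVec_mulVec, Matrix.mul_assoc]

theorem rayleighQuotient_conjTranspose_mul_mul (M : Matrix m m 𝕜) (B : Matrix m n 𝕜)
    (w : n → 𝕜) : rayleighQuotient (Bᴴ * M * B) w =
      rayleighQuotient M (B *ᵥ w) * rayleighQuotient (Bᴴ * B) w := by
  have hB : star w ⬝ᵥ ((Bᴴ * B) *ᵥ w) = star (B *ᵥ w) ⬝ᵥ (B *ᵥ w) := by
    rw [star_mulVec, ← dotProduct_mulVec, mulVec_mulVec]
  rw [rayleighQuotient, rayleighQuotient, rayleighQuotient, hB,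
    star_dotProduct_conjTranspose_mul_mul_mulVec]
  by_cases hBw : B *ᵥ w = 0
  · simp [hBw]
  · rw [div_mul_div_cancel₀ (dotProduct_star_self_eq_zero.not.mpr hBw)]

theorem star_dotProduct_diagonal_mulVec [DecidableEq n] (p w : n → 𝕜) :
    star w ⬝ᵥ (diagonal p *ᵥ w) = ∑ i, (‖w i‖ ^ 2 : ℝ) • p i := by
  simp only [dotProduct, mulVec_diagonal, Pi.star_apply, RCLike.real_smul_eq_coe_mul,
    RCLike.ofReal_pow, ← RCLike.conj_mul, RCLike.star_def]
  exact Finset.sum_congr rfl fun i _ => by ring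

theorem rayleighQuotient_diagonal_mem_convexHull [DecidableEq n] (p : n → 𝕜) {w : n → 𝕜}
    (hw : w ≠ 0) : rayleighQuotient (diagonal p) w ∈ convexHull ℝ (Set.range p) := by
  have hnormSq : star w ⬝ᵥ w = ((∑ i, ‖w i‖ ^ 2 : ℝ) : 𝕜) := by
    push_cast
    simp only [dotProduct, Pi.star_apply, RCLike.star_def, RCLike.conj_mul]
  have hpos : 0 < ∑ i, ‖w i‖ ^ 2 := by
    obtain ⟨i, hi⟩ := Function.ne_iff.mp hw
    exact Finset.sum_pos' (fun j _ => by positivity)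
      ⟨i, Finset.mem_univ i, by simpa [sq_pos_iff] using hi⟩
  convert Finset.univ.centerMass_mem_convexHull (fun i _ => sq_nonneg ‖w i‖) hpos
    (fun i _ => Set.mem_range_self (f := p) i) using 1
  rw [rayleighQuotient, star_dotProduct_diagonal_mulVec, hnormSq, Finset.centerMass,
    RCLike.real_smul_eq_coe_mul, RCLike.ofReal_inv, inv_mul_eq_div]

end RayleighQuotient

end Matrix

theorem stmt_7_general {n m : ℕ} (p : Fin n → ℂ)
    (Q : Matrix (Fin n) (Fin m) ℂ) (hQ : Qᴴ * Q = 1)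
    (X : Matrix (Fin m) (Fin m) ℂ)
    (ε : ℝ) (hε : 0 < ε)
    (hXlow : (X - (ε : ℂ) • (1 : Matrix (Fin m) (Fin m) ℂ)).PosSemidef)
    (hXup : ((1 : Matrix (Fin m) (Fin m) ℂ) - X).PosSemidef) :
    ∀ μ ∈ spectrum ℂ (Qᴴ * Matrix.diagonal p * Q * X),
      μ ∈ convexHull ℝ {z : ℂ | ∃ (i : Fin n) (k : ℝ), ε ≤ k ∧ k ≤ 1 ∧ z = (k : ℂ) * p i} := by
  intro μ hμ
  have hXpd : X.PosDef := hXlow.posDef_of_sub_smul_one hε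
  obtain ⟨Y, hYh, hYY⟩ := hXpd.posSemidef.exists_isHermitian_mul_self_eq
  have hX_eq : (Q * Y)ᴴ * (Q * Y) = X := by
    rw [conjTranspose_mul, hYh.eq, Matrix.mul_assoc, ← Matrix.mul_assoc Qᴴ, hQ, Matrix.one_mul,
      hYY]
  have hY : Function.Injective Y.mulVec :=
    mulVec_injective_of_isUnit (isUnit_of_mul_isUnit_left (hYY ▸ hXpd.isUnit))
  rw [← hYY, ← Matrix.mul_assoc] at hμ
  obtain ⟨u, hu0, hu⟩ := exists_mulVec_eq_smul_of_mem_spectrum_mul hY hμ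
  have hQYu : (Q * Y) *ᵥ u ≠ 0 := fun h => (hXpd.dotProduct_mulVec_pos hu0).ne'
    (by rw [← hX_eq, ← mulVec_mulVec, h, mulVec_zero, dotProduct_zero])
  obtain ⟨k, hεk, hk1, hk⟩ :=
    exists_rayleighQuotient_eq_ofReal (b := 1) hXlow (by simpa using hXup) hu0
  have hμ_eq : μ = k • rayleighQuotient (diagonal p) ((Q * Y) *ᵥ u) := by
    rw [RCLike.real_smul_eq_coe_mul, ← hk, mul_comm, ← hX_eq,
      ← rayleighQuotient_conjTranspose_mul_mul, ← rayleighQuotient_eq_of_mulVec_eq_smul hu0 hu]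
    simp only [conjTranspose_mul, hYh.eq, Matrix.mul_assoc]
  rw [hμ_eq]
  refine convexHull_mono ?_ (convexHull_smul k (Set.range p) ▸
    Set.smul_mem_smul_set (rayleighQuotient_diagonal_mem_convexHull p hQYu))
  rintro _ ⟨_, ⟨i, rfl⟩, rfl⟩
  exact ⟨i, k, hεk, hk1, Complex.real_smul⟩

theorem stmt_7 {n m : ℕ} (p : Fin n → ℂ)
    (Q : Matrix (Fin n) (Fin m) ℂ) (hQ : Qᴴ * Q = 1)
    (X : Matrix (Fin m) (Fin m) ℂ) (hX : X.IsHermitian)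
    (ε : ℝ) (hε : 0 < ε)
    (hXlow : (X - (ε : ℂ) • (1 : Matrix (Fin m) (Fin m) ℂ)).PosSemidef)
    (hXup : ((1 : Matrix (Fin m) (Fin m) ℂ) - X).PosSemidef) :
    ∀ μ ∈ spectrum ℂ (Qᴴ * Matrix.diagonal p * Q * X),
      μ ∈ convexHull ℝ {z : ℂ | ∃ (i : Fin n) (k : ℝ), ε ≤ k ∧ k ≤ 1 ∧ z = (k : ℂ) * p i} :=
  stmt_7_general p Q hQ X ε hε hXlow hXup
end

section
/- Let a₀, a₁, a₂, b₀, b₁, b₂ be nonnegative reals, not all of b₀, b₁, b₂ zero, and suppose (√(a₂b₀) − √(a₀b₂))² ≤ a₁b₁. Then for all ω ∈ ℝ, Re( (a₂(jω)² + a₁(jω) + a₀) · conj(b₂(jω)² + b₁(jω) + b₀) ) ≥ 0; i.e. the biquadratic rational function (a₂s² + a₁s + a₀)/(b₂s² + b₁s + b₀) has nonnegative real part on the imaginary axis. -/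
theorem stmt_11 (a₀ a₁ a₂ b₀ b₁ b₂ : ℝ)
    (ha₀ : 0 ≤ a₀) (ha₁ : 0 ≤ a₁) (ha₂ : 0 ≤ a₂)
    (hb₀ : 0 ≤ b₀) (hb₁ : 0 ≤ b₁) (hb₂ : 0 ≤ b₂)
    (hb : ¬(b₀ = 0 ∧ b₁ = 0 ∧ b₂ = 0))
    (hcond : (Real.sqrt (a₂ * b₀) - Real.sqrt (a₀ * b₂)) ^ 2 ≤ a₁ * b₁) :
    ∀ ω : ℝ,
      0 ≤ (((a₂ : ℂ) * ((ω : ℂ) * Complex.I) ^ 2 + (a₁ : ℂ) * ((ω : ℂ) * Complex.I) + a₀) *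
        (starRingEnd ℂ) ((b₂ : ℂ) * ((ω : ℂ) * Complex.I) ^ 2 +
          (b₁ : ℂ) * ((ω : ℂ) * Complex.I) + b₀)).re := by
  intro ω
  set c := Real.sqrt (a₂ * b₀) with hc
  set d := Real.sqrt (a₀ * b₂) with hd
  set e := Real.sqrt (a₀ * b₀) with he
  set f := Real.sqrt (a₂ * b₂) with hf
  have hc2 : c ^ 2 = a₂ * b₀ := Real.sq_sqrt (by positivity)
  have hd2 : d ^ 2 = a₀ * b₂ := Real.sq_sqrt (by positivity)
  have he2 : e ^ 2 = a₀ * b₀ := Real.sq_sqrt (by positivity)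
  have hf2 : f ^ 2 = a₂ * b₂ := Real.sq_sqrt (by positivity)
  have hcn : 0 ≤ c := Real.sqrt_nonneg _
  have hdn : 0 ≤ d := Real.sqrt_nonneg _
  have hen : 0 ≤ e := Real.sqrt_nonneg _
  have hfn : 0 ≤ f := Real.sqrt_nonneg _
  have hcdef : c * d = e * f := by
    nlinarith [sq_nonneg (c*d - e*f), sq_nonneg (c*d + e*f), mul_nonneg hcn hdn,
      mul_nonneg hen hfn]
  simp only [Complex.mul_re, Complex.mul_im, Complex.add_re, Complex.add_im,
    Complex.ofReal_re, Complex.ofReal_im, Complex.I_re, Complex.I_im,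
    Complex.conj_re, Complex.conj_im, pow_two]
  ring_nf
  have h1 : (c - d) ^ 2 * ω ^ 2 ≤ a₁ * b₁ * ω ^ 2 :=
    mul_le_mul_of_nonneg_right hcond (sq_nonneg ω)
  have h2 : (c - d) ^ 2 * ω ^ 2 = (c ^ 2 + d ^ 2) * ω ^ 2 - 2 * (c * d) * ω ^ 2 := by ring
  have h3 : (e - f * ω ^ 2) ^ 2 = e ^ 2 + f ^ 2 * ω ^ 4 - 2 * (e * f) * ω ^ 2 := by ring
  have h4 : 0 ≤ (e - f * ω ^ 2) ^ 2 := sq_nonneg _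
  rw [hc2, hd2, hcdef] at h2
  rw [he2, hf2] at h3
  linarith
end

section
/- Fix m ≥ 0, d > 0, γ > 0. If T > 0 is sufficiently large and ε > 0 is sufficiently small, then for all ω ∈ ℝ the rational function ((1−ε)m s² + (d − dε − Tεm)s + (γ − Tdε)) / (m s² + (d + Tm)s + Td) evaluated at s = jω has nonnegative real part. Concretely, it suffices that T ≥ γ/d, ε ≤ d²/(d(d+Tm) + T²m²), and all numerator coefficients are nonnegative. -/
lemma key_biquad (a0 a1 a2 b0 b1 b2 t : ℝ) (ht : 0 ≤ t)
    (h00 : 0 ≤ a0) (h22 : 0 ≤ a2)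
    (hb0 : 0 ≤ b0) (hb2 : 0 ≤ b2)
    (h1 : a0 * b2 ≤ a2 * b0) (h2 : a2 * b0 ≤ a1 * b1) :
    0 ≤ a2 * b2 * t ^ 2 + (a1 * b1 - a2 * b0 - a0 * b2) * t + a0 * b0 := by
  rcases eq_or_lt_of_le (mul_nonneg h22 hb2) with h | h
  · rcases mul_eq_zero.mp h.symm with ha | hb
    · have : a0 * b2 = 0 := le_antisymm (by nlinarith) (mul_nonneg h00 hb2)
      nlinarith [mul_nonneg h00 hb0]
    · have : a0 * b2 = 0 := by simp [hb, mul_eq_zero]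
      nlinarith [mul_nonneg h00 hb0]
  · have h4 : 0 ≤ 4 * (a2 * b2) * (a2 * b2 * t ^ 2 + (a1 * b1 - a2 * b0 - a0 * b2) * t + a0 * b0) := by
      nlinarith [sq_nonneg (2 * a2 * b2 * t - a0 * b2),
        mul_nonneg (mul_nonneg h00 hb2) (mul_nonneg h22 hb0),
        mul_le_mul_of_nonneg_left h1 (mul_nonneg h00 hb2),
        mul_nonneg (mul_nonneg h22 hb2) ht,
        mul_nonneg (sub_nonneg.mpr h2) (mul_nonneg (mul_nonneg h22 hb2) ht)]
    nlinarith

lemma re_div_quad (a0 a1 a2 b0 b1 b2 ω : ℝ)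
    (key : 0 ≤ a2 * b2 * (ω ^ 2) ^ 2 + (a1 * b1 - a2 * b0 - a0 * b2) * ω ^ 2 + a0 * b0) :
    0 ≤ (((a2 : ℂ) * ((ω : ℂ) * Complex.I) ^ 2 + ((a1 : ℝ) : ℂ) * ((ω : ℂ) * Complex.I) + ((a0 : ℝ) : ℂ)) /
          ((b2 : ℂ) * ((ω : ℂ) * Complex.I) ^ 2 + ((b1 : ℝ) : ℂ) * ((ω : ℂ) * Complex.I) + ((b0 : ℝ) : ℂ))).re := by
  have hN : (((a2 : ℝ) : ℂ) * ((ω : ℂ) * Complex.I) ^ 2 + ((a1 : ℝ) : ℂ) * ((ω : ℂ) * Complex.I) + ((a0 : ℝ) : ℂ))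
      = Complex.mk (a0 - a2 * ω ^ 2) (a1 * ω) := by
    apply Complex.ext <;> simp [Complex.mul_re, Complex.mul_im, pow_two] <;> ring
  have hD : (((b2 : ℝ) : ℂ) * ((ω : ℂ) * Complex.I) ^ 2 + ((b1 : ℝ) : ℂ) * ((ω : ℂ) * Complex.I) + ((b0 : ℝ) : ℂ))
      = Complex.mk (b0 - b2 * ω ^ 2) (b1 * ω) := by
    apply Complex.ext <;> simp [Complex.mul_re, Complex.mul_im, pow_two] <;> ring
  rw [hN, hD, Complex.div_re, ← add_div]
  apply div_nonneg _ (Complex.normSq_nonneg _)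
  simp only []
  nlinarith [key]

theorem stmt_12 (m d γ T ε : ℝ)
    (hm : 0 ≤ m) (hd : 0 < d) (hγ : 0 < γ) (hT : 0 < T) (hε : 0 < ε)
    (hT' : γ / d ≤ T)
    (hε' : ε ≤ d ^ 2 / (d * (d + T * m) + T ^ 2 * m ^ 2))
    (hnum₂ : 0 ≤ (1 - ε) * m)
    (hnum₁ : 0 ≤ d - d * ε - T * ε * m)
    (hnum₀ : 0 ≤ γ - T * d * ε) :
    ∀ ω : ℝ,
      0 ≤ ((((1 - ε : ℝ) : ℂ) * m * ((ω : ℂ) * Complex.I) ^ 2 +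
            ((d - d * ε - T * ε * m : ℝ) : ℂ) * ((ω : ℂ) * Complex.I) +
            ((γ - T * d * ε : ℝ) : ℂ)) /
          ((m : ℂ) * ((ω : ℂ) * Complex.I) ^ 2 +
            ((d + T * m : ℝ) : ℂ) * ((ω : ℂ) * Complex.I) + ((T * d : ℝ) : ℂ))).re := by
  intro ω
  have hγT : γ ≤ T * d := by
    have := (div_le_iff₀ hd).mp hT'
    linarith
  have hDpos : 0 < d * (d + T * m) + T ^ 2 * m ^ 2 := by nlinarith
  have hεD : ε * (d * (d + T * m) + T ^ 2 * m ^ 2) ≤ d ^ 2 := by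
    have := (le_div_iff₀ hDpos).mp hε'
    linarith
  have h1 : (γ - T * d * ε) * m ≤ (1 - ε) * m * (T * d) := by
    nlinarith [mul_le_mul_of_nonneg_left hγT hm]
  have h2 : (1 - ε) * m * (T * d) ≤ (d - d * ε - T * ε * m) * (d + T * m) := by
    nlinarith
  have hb0 : (0 : ℝ) ≤ T * d := by positivity
  have key := key_biquad (γ - T * d * ε) (d - d * ε - T * ε * m) ((1 - ε) * m)
    (T * d) (d + T * m) m (ω ^ 2) (sq_nonneg ω) hnum₀ hnum₂ hb0 hm h1 h2
  have := re_div_quad (γ - T * d * ε) (d - d * ε - T * ε * m) ((1 - ε) * m)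
    (T * d) (d + T * m) m ω key
  have hcast : ((((1 - ε) * m : ℝ)) : ℂ) = ((1 - ε : ℝ) : ℂ) * (m : ℂ) := by push_cast; ring
  rw [hcast] at this
  exact this
end

section
/- Suppose p_i : ℂ → ℂ for i = 1,…,n are continuous on the closed right half-plane, analytic in its interior, and there exist ε > 0 and γ > 0 such that Re(p_i(jω)) ≥ ε and |Im(p_i(jω))| ≤ γ for all ω ∈ ℝ (including the limit as |ω| → ∞). Then for T > 0 sufficiently large there exists δ > 0 such that for all i and all ω ∈ ℝ: Re( (jω/(jω + T))·(1 + p_i(jω)/(jω)) ) ≥ δ. Explicitly, it suffices that (Tε + ω(ω − sign(ω)γ))/(ω² + T²) ≥ δ for all ω. -/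
open Complex

lemma re_I_mul_div_I_mul_add_mul_one_add_div (z : ℂ) {ω : ℝ} (hω : ω ≠ 0) (T : ℝ) :
    ((I * ω / (I * ω + T)) * (1 + z / (I * ω))).re
      = (T * z.re + ω * (ω + z.im)) / (ω ^ 2 + T ^ 2) := by
  have hIω : I * (ω : ℂ) ≠ 0 := mul_ne_zero I_ne_zero (ofReal_ne_zero.mpr hω)
  rw [div_mul_eq_mul_div, mul_one_add, mul_div_cancel₀ z hIω, div_re, normSq_apply, ← add_div]
  simp only [add_re, add_im, mul_re, mul_im, I_re, I_im, ofReal_re, ofReal_im]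
  congr 1 <;> ring

/-- The cross term satisfies `ω b ≥ -γ|ω| ≥ -(γ² + ω²)/2 ≥ -(T ε + ω²)/2`, so the numerator is at
least `(T ε + ω²)/2`, which is at least `ε (ω² + T²) / (2 T)` because `ε ≤ T`. -/
lemma div_two_mul_le_of_sq_le_mul {ε γ T a b ω : ℝ} (hε : 0 < ε) (hεT : ε ≤ T)
    (hγT : γ ^ 2 ≤ T * ε) (ha : ε ≤ a) (hb : |b| ≤ γ) :
    ε / (2 * T) ≤ (T * a + ω * (ω + b)) / (ω ^ 2 + T ^ 2) := by
  have hT : 0 < T := hε.trans_le hεT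
  have hcross : -(γ * |ω|) ≤ ω * b := by
    have : |ω * b| ≤ |ω| * γ := by
      rw [abs_mul]; exact mul_le_mul_of_nonneg_left hb (abs_nonneg ω)
    linarith [neg_abs_le (ω * b)]
  have hamgm : 2 * γ * |ω| ≤ γ ^ 2 + ω ^ 2 := by
    nlinarith [sq_nonneg (γ - |ω|), sq_abs ω]
  have hnum : (T * ε + ω ^ 2) / 2 ≤ T * a + ω * (ω + b) := by
    nlinarith [mul_le_mul_of_nonneg_left ha hT.le]
  rw [div_le_div_iff₀ (by positivity) (by positivity)]
  nlinarith [mul_le_mul_of_nonneg_left hεT (sq_nonneg ω)]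

theorem stmt_14_general {n : ℕ} (p : Fin n → ℂ → ℂ)
    (ε γ : ℝ) (hε : 0 < ε)
    (hre : ∀ (i : Fin n) (ω : ℝ), ε ≤ (p i (Complex.I * ω)).re)
    (him : ∀ (i : Fin n) (ω : ℝ), |(p i (Complex.I * ω)).im| ≤ γ) :
    ∃ T₀ : ℝ, 0 < T₀ ∧ ∀ T : ℝ, T₀ ≤ T → ∃ δ : ℝ, 0 < δ ∧
      ∀ (i : Fin n) (ω : ℝ), ω ≠ 0 →
        δ ≤ ((Complex.I * ω / (Complex.I * ω + T)) *
          (1 + p i (Complex.I * ω) / (Complex.I * ω))).re := by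
  refine ⟨max (γ ^ 2 / ε) ε, lt_max_of_lt_right hε, fun T hT => ?_⟩
  have hεT : ε ≤ T := (le_max_right _ _).trans hT
  have hγT : γ ^ 2 ≤ T * ε :=
    (div_le_iff₀ hε).mp ((le_max_left _ _).trans hT)
  refine ⟨ε / (2 * T), by have := hε.trans_le hεT; positivity, fun i ω hω => ?_⟩
  rw [re_I_mul_div_I_mul_add_mul_one_add_div _ hω]
  exact div_two_mul_le_of_sq_le_mul hε hεT hγT (hre i ω) (him i ω)

theorem stmt_14 {n : ℕ} (p : Fin n → ℂ → ℂ)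
    (hc : ∀ i, ContinuousOn (p i) {s : ℂ | 0 ≤ s.re})
    (ha : ∀ i, DifferentiableOn ℂ (p i) {s : ℂ | 0 < s.re})
    (ε γ : ℝ) (hε : 0 < ε) (hγ : 0 < γ)
    (hre : ∀ (i : Fin n) (ω : ℝ), ε ≤ (p i (Complex.I * ω)).re)
    (him : ∀ (i : Fin n) (ω : ℝ), |(p i (Complex.I * ω)).im| ≤ γ) :
    ∃ T₀ : ℝ, 0 < T₀ ∧ ∀ T : ℝ, T₀ ≤ T → ∃ δ : ℝ, 0 < δ ∧
      ∀ (i : Fin n) (ω : ℝ), ω ≠ 0 →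
        δ ≤ ((Complex.I * ω / (Complex.I * ω + T)) *
          (1 + p i (Complex.I * ω) / (Complex.I * ω))).re :=
  stmt_14_general p ε γ hε hre him
end
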